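/- The least primitive root modulo 40487 equals 5, but 5 is not a primitive root modulo 40487², so the least primitive root modulo 40487² differs from the least primitive root modulo 40487. -/

import Mathlib

/-- `a` is a primitive root modulo `n`: the multiplicative order of `a` mod `n`
equals `φ(n)`, i.e. `a` generates `(ℤ/nℤ)ˣ`. -/
def IsPrimitiveRootMod (a n : ℕ) : Prop :=
  orderOf (a : ZMod n) = Nat.totient n

/-- `a` is the least positive primitive root modulo `n`. -/
def IsLeastPrimitiveRootMod (a n : ℕ) : Prop :=
  0 < a ∧ IsPrimitiveRootMod a n ∧ ∀ b : ℕ, 0 < b → b < a → ¬ IsPrimitiveRootMod b n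

/-!
Since `40486 = 2 · 31 · 653`, the order of `5` modulo `p = 40487` is `p - 1` because none of
`5 ^ ((p - 1) / q)` with `q ∈ {2, 31, 653}` is `1` mod `p`. The smaller candidates `1, 2, 3, 4`
are quadratic residues mod `p`, so their orders divide `(p - 1) / 2`. Finally
`5 ^ (p - 1) ≡ 1 [MOD p²]` (`p` is a base-5 Wieferich prime), so the order of `5` modulo `p²`
is at most `p - 1 < φ(p²)`.
-/

theorem ZMod.natCast_pow_eq_one_iff {a n k : ℕ} (hn : 1 < n) :
    (a : ZMod n) ^ k = 1 ↔ a ^ k % n = 1 := by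
  rw [← Nat.cast_pow, ← Nat.cast_one, ZMod.natCast_eq_natCast_iff', Nat.one_mod_eq_one.mpr hn.ne']

theorem isPrimitiveRootMod_of_pow_mod {a n : ℕ} (hn : 1 < n) (h1 : a ^ n.totient % n = 1)
    (hq : ∀ q ∈ n.totient.primeFactors, a ^ (n.totient / q) % n ≠ 1) :
    IsPrimitiveRootMod a n := by
  have htot : 0 < n.totient := Nat.totient_pos.mpr (by omega)
  refine orderOf_eq_of_pow_and_pow_div_prime htot
    ((ZMod.natCast_pow_eq_one_iff hn).mpr h1) fun q hq' hdvd => ?_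
  rw [Ne, ZMod.natCast_pow_eq_one_iff hn]
  exact hq q (Nat.mem_primeFactors.mpr ⟨hq', hdvd, htot.ne'⟩)

theorem not_isPrimitiveRootMod_of_pow_mod_eq_one {a n k : ℕ} (hk : 0 < k)
    (hkn : k < n.totient) (h : a ^ k % n = 1) : ¬ IsPrimitiveRootMod a n := by
  have hn : 1 < n := by
    by_contra! hn
    interval_cases n <;> simp_all
  intro hprim
  have := orderOf_le_of_pow_eq_one hk ((ZMod.natCast_pow_eq_one_iff hn).mpr h)
  rw [hprim] at this
  omega

theorem g_ne_h_at_40487 :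
    IsLeastPrimitiveRootMod 5 40487 ∧ ¬ IsPrimitiveRootMod 5 (40487 ^ 2) ∧
      ∀ h : ℕ, IsLeastPrimitiveRootMod h (40487 ^ 2) → h ≠ 5 := by
  have hp : Nat.Prime 40487 := by norm_num
  have htot : Nat.totient 40487 = 40486 := Nat.totient_prime hp
  have hfactors : Nat.primeFactors 40486 = {2, 31, 653} := by
    simp only [Nat.primeFactors, Nat.primeFactorsList_ofNat]
    rfl
  have hprim : IsPrimitiveRootMod 5 40487 := by
    refine isPrimitiveRootMod_of_pow_mod (by norm_num) ?_ ?_ <;> rw [htot]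
    · decide +kernel
    · rw [hfactors]
      decide +kernel
  have hleast : ∀ b : ℕ, 0 < b → b < 5 → ¬ IsPrimitiveRootMod b 40487 := by
    intro b hb0 hb5
    interval_cases b <;>
      exact not_isPrimitiveRootMod_of_pow_mod_eq_one (k := 20243) (by norm_num) (by omega)
        (by decide +kernel)
  have hnot5 : ¬ IsPrimitiveRootMod 5 (40487 ^ 2) := by
    refine not_isPrimitiveRootMod_of_pow_mod_eq_one (k := 40486) (by norm_num) ?_
      (by decide +kernel)
    rw [Nat.totient_prime_pow hp two_pos]
    norm_num
  refine ⟨⟨by norm_num, hprim, hleast⟩, hnot5, ?_⟩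
  rintro h ⟨-, h5, -⟩ rfl
  exact hnot5 h5
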